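/- arXiv:2201.03626 — 2 statements merged into one kernel-verified Lean document; each statement's English description precedes it below -/
import Mathlib

section
/- Let X and Y be real algebraic sets in ℝ^n with Y ⊆ X, and suppose there is a polynomial map φ : ℝ^n → ℝ^n (each coordinate of φ given by evaluation of a polynomial in ℝ[x₁,…,xₙ]) such that φ maps Y onto X, i.e., φ(Y) = X. Then Y = X. -/
/-!
Let `Vₘ` be the set of points whose first `m` iterates under `φ` stay in `Y`. These are algebraic
sets decreasing in `m`, so by the Hilbert basis theorem `V_{N+1} = V_N` for some `N`. As
`Y ⊆ φ(Y)`, `φ` maps `V_{m+1}` onto `Vₘ`, so `φ^[m]` maps `Vₘ` onto `Y` and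
`Y = φ^[N+1](V_{N+1}) = φ(φ^[N](V_N)) = φ(Y) = X`.
-/

open MvPolynomial

section Iterates

variable {α : Type*} (f : α → α) (Y : Set α)

def firstIteratesIn (m : ℕ) : Set α := {x | ∀ j ≤ m, f^[j] x ∈ Y}

@[simp]
theorem firstIteratesIn_zero : firstIteratesIn f Y 0 = Y := by
  ext x
  simp [firstIteratesIn]

theorem firstIteratesIn_succ (m : ℕ) :
    firstIteratesIn f Y (m + 1) = Y ∩ f ⁻¹' firstIteratesIn f Y m := by
  ext x
  constructor
  · intro h
    exact ⟨h 0 (m + 1).zero_le, fun j hj => h (j + 1) (by omega)⟩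
  · rintro ⟨hx, h⟩ (_ | j) hj
    exacts [hx, h j (by omega)]

theorem firstIteratesIn_antitone : Antitone (firstIteratesIn f Y) :=
  fun _ _ hmm' _ hx j hj => hx j (hj.trans hmm')

variable {f Y}

theorem image_firstIteratesIn_succ (hY : Y ⊆ f '' Y) (m : ℕ) :
    f '' firstIteratesIn f Y (m + 1) = firstIteratesIn f Y m := by
  rw [firstIteratesIn_succ]
  refine (Set.image_mono Set.inter_subset_right).trans (Set.image_preimage_subset f _)
    |>.antisymm fun x hx => ?_
  obtain ⟨y, hyY, rfl⟩ := hY (hx 0 m.zero_le)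
  exact ⟨y, ⟨hyY, hx⟩, rfl⟩

theorem image_iterate_firstIteratesIn (hY : Y ⊆ f '' Y) (m : ℕ) :
    f^[m] '' firstIteratesIn f Y m = Y := by
  induction m with
  | zero => simp
  | succ m ih =>
    rw [Function.iterate_succ, Set.image_comp, image_firstIteratesIn_succ hY, ih]

theorem image_eq_self_of_firstIteratesIn_succ_eq (hY : Y ⊆ f '' Y) {N : ℕ}
    (hN : firstIteratesIn f Y (N + 1) = firstIteratesIn f Y N) : f '' Y = Y :=
  calc f '' Y = f '' (f^[N] '' firstIteratesIn f Y N) := by rw [image_iterate_firstIteratesIn hY]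
    _ = f^[N + 1] '' firstIteratesIn f Y (N + 1) := by
      rw [hN, Function.iterate_succ', Set.image_comp]
    _ = Y := image_iterate_firstIteratesIn hY _

end Iterates

section AlgebraicSets

variable {k K : Type*} [Field k] [Field K] [Algebra k K] {σ τ : Type*}

variable (k) in
def IsAlgebraicSet (S : Set (σ → K)) : Prop := ∃ I : Ideal (MvPolynomial σ k), zeroLocus K I = S

theorem isAlgebraicSet_iff {S : Set (σ → K)} :
    IsAlgebraicSet k S ↔ zeroLocus K (vanishingIdeal k S) = S := by
  refine ⟨?_, fun h => ⟨_, h⟩⟩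
  rintro ⟨I, rfl⟩
  exact zeroLocus_vanishingIdeal_galoisConnection.l_u_l_eq_l I

theorem IsAlgebraicSet.inter {S T : Set (σ → K)} (hS : IsAlgebraicSet k S)
    (hT : IsAlgebraicSet k T) : IsAlgebraicSet k (S ∩ T) := by
  obtain ⟨I, rfl⟩ := hS
  obtain ⟨J, rfl⟩ := hT
  exact ⟨I ⊔ J, zeroLocus_vanishingIdeal_galoisConnection.l_sup⟩

theorem IsAlgebraicSet.preimage_aeval {S : Set (τ → K)} (hS : IsAlgebraicSet k S)
    (p : τ → MvPolynomial σ k) :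
    IsAlgebraicSet k ((fun x i => aeval x (p i)) ⁻¹' S) := by
  obtain ⟨I, rfl⟩ := hS
  refine ⟨Ideal.span (bind₁ p '' I), ?_⟩
  ext x
  simp [zeroLocus_span, aeval_bind₁]

theorem IsAlgebraicSet.firstIteratesIn {Y : Set (σ → K)} (hY : IsAlgebraicSet k Y)
    (p : σ → MvPolynomial σ k) (m : ℕ) :
    IsAlgebraicSet k (firstIteratesIn (fun x i => aeval x (p i)) Y m) := by
  induction m with
  | zero => simpa
  | succ m ih => simpa only [firstIteratesIn_succ] using hY.inter (ih.preimage_aeval p)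

theorem exists_succ_eq_of_antitone_isAlgebraicSet [Finite σ] {V : ℕ → Set (σ → K)}
    (hV : Antitone V) (halg : ∀ m, IsAlgebraicSet k (V m)) : ∃ N, V (N + 1) = V N := by
  obtain ⟨N, hN⟩ := monotone_stabilizes_iff_noetherian.mpr inferInstance
    ⟨fun m => vanishingIdeal k (V m), fun _ _ h => vanishingIdeal_anti_mono (hV h)⟩
  refine ⟨N, ?_⟩
  rw [← isAlgebraicSet_iff.1 (halg N), ← isAlgebraicSet_iff.1 (halg (N + 1))]
  exact congrArg (zeroLocus K) (hN (N + 1) N.le_succ).symm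

end AlgebraicSets

theorem eq_of_polynomialMap_surjective_general (n : ℕ) (X Y : Set (Fin n → ℝ))
    (hYalg : Y = MvPolynomial.zeroLocus ℝ (MvPolynomial.vanishingIdeal ℝ Y))
    (hYX : Y ⊆ X)
    (p : Fin n → MvPolynomial (Fin n) ℝ)
    (hsurj : (fun x : Fin n → ℝ => fun i => MvPolynomial.eval x (p i)) '' Y = X) :
    Y = X := by
  set φ := fun x : Fin n → ℝ => fun i => MvPolynomial.eval x (p i)
  have hYφ : Y ⊆ φ '' Y := hsurj ▸ hYX
  have hYalg' : IsAlgebraicSet ℝ Y := isAlgebraicSet_iff.2 hYalg.symm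
  obtain ⟨N, hN⟩ := exists_succ_eq_of_antitone_isAlgebraicSet (firstIteratesIn_antitone φ Y)
    fun m => hYalg'.firstIteratesIn p m -- `aeval x` is definitionally `eval x` here
  rw [← hsurj, image_eq_self_of_firstIteratesIn_succ_eq hYφ hN]

/-- **Lemma (surjective polynomial map onto a superset).**
Let `X, Y ⊆ ℝⁿ` be real algebraic sets (each the zero locus of its vanishing ideal) with
`Y ⊆ X`, and suppose there is a polynomial map `φ : ℝⁿ → ℝⁿ` (each coordinate given by
evaluation of a polynomial) with `φ(Y) = X`.  Then `Y = X`. -/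
theorem eq_of_polynomialMap_surjective (n : ℕ) (X Y : Set (Fin n → ℝ))
    (hXalg : X = MvPolynomial.zeroLocus ℝ (MvPolynomial.vanishingIdeal ℝ X))
    (hYalg : Y = MvPolynomial.zeroLocus ℝ (MvPolynomial.vanishingIdeal ℝ Y))
    (hYX : Y ⊆ X)
    (p : Fin n → MvPolynomial (Fin n) ℝ)
    (hsurj : (fun x : Fin n → ℝ => fun i => MvPolynomial.eval x (p i)) '' Y = X) :
    Y = X :=
  eq_of_polynomialMap_surjective_general n X Y hYalg hYX p hsurj
end

section
/- Let ι : G → H be a group homomorphism, where G is residually finite. Suppose that for every N ≥ 1, every group homomorphism ρ : G → SO(N, ℝ) factors through ι, i.e., there exists a homomorphism ρ' : H → SO(N, ℝ) with ρ' ∘ ι = ρ. Then ι is injective. -/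
/-!
Every finite group `Q` embeds into `SO(N, ℝ)`: Cayley's theorem embeds it into `Perm Q`,
permutation matrices embed that into `O(|Q|)`, and `A ↦ diag(A, det A)` embeds `O(|Q|)` into
`SO(|Q| + 1)`. If `ι g = 1` with `g ≠ 1`, residual finiteness gives `f : G →* Q` with `f g ≠ 1`;
composing with such an embedding gives `ρ : G →* SO(N)` with `ρ g ≠ 1`, which cannot factor
through `ι`.
-/

open Equiv

namespace Matrix

attribute [local instance] starRingOfComm

variable {m n R : Type*} [Fintype m] [DecidableEq m] [Fintype n] [DecidableEq n] [CommRing R]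

theorem permMatrix_mem_orthogonalGroup (σ : Perm m) :
    σ.permMatrix R ∈ orthogonalGroup m R := by
  rw [mem_orthogonalGroup_iff, transpose_permMatrix, ← permMatrix_mul, inv_mul_cancel,
    permMatrix_one]

variable (m R) in
def orthogonalGroup.ofPerm : Perm m →* orthogonalGroup m R :=
  (permMatrixHom (R := R)).codRestrict _ fun σ => permMatrix_mem_orthogonalGroup σ⁻¹

theorem orthogonalGroup.ofPerm_injective [Nontrivial R] :
    Function.Injective (orthogonalGroup.ofPerm m R) := by
  intro σ τ h
  have := PEquiv.toMatrix_injective (Subtype.ext_iff.mp h)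
  exact inv_injective <| Equiv.ext fun x => Option.some_injective _ (congrArg (· x) this)

theorem fromBlocks_det_mem_specialOrthogonalGroup {A : Matrix m m R}
    (hA : A ∈ orthogonalGroup m R) :
    fromBlocks A 0 0 (A.det • 1 : Matrix Unit Unit R) ∈ specialOrthogonalGroup (m ⊕ Unit) R := by
  have hd : star A.det * A.det = 1 := (det_of_mem_unitary hA).1
  refine ⟨mem_unitaryGroup_iff.mpr ?_, ?_⟩
  · rw [star_eq_conjTranspose, fromBlocks_conjTranspose, fromBlocks_multiply]
    simp [← star_eq_conjTranspose, mem_unitaryGroup_iff.mp hA, smul_smul, hd]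
  · rw [SetLike.mem_coe, MonoidHom.mem_mker, coe_detMonoidHom, det_fromBlocks_zero₂₁,
      det_smul_of_tower, det_one, Fintype.card_unit, pow_one, smul_eq_mul, mul_one]
    -- `star` is the identity for `starRingOfComm`
    exact hd

variable (m R) in
def orthogonalGroup.extendByDet : orthogonalGroup m R →* specialOrthogonalGroup (m ⊕ Unit) R where
  toFun A := ⟨_, fromBlocks_det_mem_specialOrthogonalGroup A.2⟩
  map_one' := Subtype.ext <| by simp [fromBlocks_one]
  map_mul' A B := Subtype.ext <| by simp [fromBlocks_multiply, det_mul, smul_smul, mul_comm]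

theorem orthogonalGroup.extendByDet_injective :
    Function.Injective (orthogonalGroup.extendByDet m R) :=
  fun _ _ h => Subtype.ext (fromBlocks_inj.mp (Subtype.ext_iff.mp h)).1

theorem reindex_mem_specialUnitaryGroup {α : Type*} [CommRing α] [StarRing α] (e : m ≃ n)
    {A : Matrix m m α} (hA : A ∈ specialUnitaryGroup m α) :
    reindex e e A ∈ specialUnitaryGroup n α := by
  refine ⟨mem_unitaryGroup_iff.mpr ?_, ?_⟩
  · simpa [star_eq_conjTranspose, conjTranspose_reindex] using
      congrArg (reindex e e) (mem_unitaryGroup_iff.mp hA.1)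
  · simpa [det_reindex_self] using hA.2

def specialUnitaryGroup.reindex {α : Type*} [CommRing α] [StarRing α] (e : m ≃ n) :
    specialUnitaryGroup m α ≃* specialUnitaryGroup n α where
  toFun A := ⟨_, reindex_mem_specialUnitaryGroup e A.2⟩
  invFun A := ⟨_, reindex_mem_specialUnitaryGroup e.symm A.2⟩
  left_inv A := Subtype.ext <| by simp
  right_inv A := Subtype.ext <| by simp
  map_mul' A B := Subtype.ext <| by simp

variable (R) in
theorem exists_injective_monoidHom_specialOrthogonalGroup [Nontrivial R] (Q : Type*) [Group Q]
    [Finite Q] :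
    ∃ N : ℕ, 1 ≤ N ∧ ∃ φ : Q →* specialOrthogonalGroup (Fin N) R, Function.Injective φ := by
  have := Fintype.ofFinite Q
  classical
  let e := Fintype.equivFin (Q ⊕ Unit)
  refine ⟨_, Fintype.card_pos, (specialUnitaryGroup.reindex e).toMonoidHom.comp <|
    (orthogonalGroup.extendByDet Q R).comp <|
      (orthogonalGroup.ofPerm Q R).comp (MulAction.toPermHom Q Q), ?_⟩
  exact (specialUnitaryGroup.reindex e).injective.comp <|
    orthogonalGroup.extendByDet_injective.comp <|
      orthogonalGroup.ofPerm_injective.comp MulAction.toPerm_injective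

end Matrix

/-- Let `ι : G → H` be a group homomorphism with `G` residually finite.  If for every `N ≥ 1`
every homomorphism `ρ : G → SO(N, ℝ)` factors through `ι` (i.e. there is `ρ' : H → SO(N, ℝ)`
with `ρ' ∘ ι = ρ`), then `ι` is injective. -/
theorem injective_of_SO_factorization (G H : Type*) [Group G] [Group H] (ι : G →* H)
    (hres : ∀ g : G, g ≠ 1 → ∃ (Q : Type) (_ : Group Q) (_ : Finite Q)
      (f : G →* Q), f g ≠ 1)
    (hfactor : ∀ N : ℕ, 1 ≤ N →
      ∀ ρ : G →* Matrix.specialOrthogonalGroup (Fin N) ℝ,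
        ∃ ρ' : H →* Matrix.specialOrthogonalGroup (Fin N) ℝ, ρ'.comp ι = ρ) :
    Function.Injective ι := by
  refine (injective_iff_map_eq_one ι).mpr fun g hg => ?_
  by_contra hg1
  obtain ⟨Q, _, _, f, hfg⟩ := hres g hg1
  obtain ⟨N, hN, φ, hφ⟩ := Matrix.exists_injective_monoidHom_specialOrthogonalGroup ℝ Q
  obtain ⟨ρ', hρ'⟩ := hfactor N hN (φ.comp f)
  have hφfg : φ (f g) = φ 1 := by
    rw [map_one, ← MonoidHom.comp_apply, ← hρ', MonoidHom.comp_apply, hg, map_one]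
  exact hfg (hφ hφfg)
end
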